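/- For the Kimura metric ds² = (r²/b) dt² - (1/(r²b²)) dr² - r² dθ² - r² sin²θ dφ² on {r > 0, 0 < θ < π} with b a nonzero constant, the vector field ξ = -(1/r) ∂_t + r² b t ∂_r is a proper conformal Killing vector with conformal factor 2rbt: £_ξ g = 2rbt · g. -/
import Mathlib


noncomputable section

/-- Points of the 4-dimensional coordinate domain. -/
abbrev Pt : Type := Fin 4 → ℝ

/-- A (real) vector field, given by its coordinate components. -/
abbrev Vec : Type := Pt → Fin 4 → ℝ

/-- Directional derivative of a scalar along a vector field (Lie derivative of a function). -/
def dd (X : Vec) (f : Pt → ℝ) (p : Pt) : ℝ := fderiv ℝ f p (X p)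

/-- Coordinate partial derivative `∂_μ`. -/
def pd (μ : Fin 4) (f : Pt → ℝ) (p : Pt) : ℝ := fderiv ℝ f p (Pi.single μ 1)

/-- Lie bracket of vector fields, `[X,Y]^i = X^ν ∂_ν Y^i - Y^ν ∂_ν X^i`. -/
def lb (X Y : Vec) : Vec := fun p i =>
  fderiv ℝ (fun q => Y q i) p (X p) - fderiv ℝ (fun q => X q i) p (Y p)

/-- Coordinate components of the Lie derivative of a metric:
`(£_ξ g)_{μν} = ξ^σ ∂_σ g_{μν} + g_{σν} ∂_μ ξ^σ + g_{μσ} ∂_ν ξ^σ`. -/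
def lieDg (ξ : Vec) (g : Pt → Fin 4 → Fin 4 → ℝ) (p : Pt) (μ ν : Fin 4) : ℝ :=
  (∑ σ : Fin 4, ξ p σ * pd σ (fun q => g q μ ν) p)
  + (∑ σ : Fin 4, g p σ ν * pd μ (fun q => ξ q σ) p)
  + (∑ σ : Fin 4, g p μ σ * pd ν (fun q => ξ q σ) p)

/-- Pointwise value `g(X,Y)` of the metric on two vector fields. -/
def gVal (g : Pt → Fin 4 → Fin 4 → ℝ) (X Y : Vec) (p : Pt) : ℝ :=
  ∑ i : Fin 4, ∑ j : Fin 4, g p i j * X p i * Y p j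

/-- The Kimura metric in coordinates (t,r,θ,φ) = (p 0, p 1, p 2, p 3):
`ds² = (r²/b) dt² - (1/(r²b²)) dr² - r² dθ² - r² sin²θ dφ²`. -/
def kimura (b : ℝ) : Pt → Fin 4 → Fin 4 → ℝ := fun p =>
  ![![p 1 ^ 2 / b, 0, 0, 0],
    ![0, -(1 / (p 1 ^ 2 * b ^ 2)), 0, 0],
    ![0, 0, -(p 1 ^ 2), 0],
    ![0, 0, 0, -(p 1 ^ 2 * Real.sin (p 2) ^ 2)]]

/-- `ξ = -(1/r) ∂_t + r²bt ∂_r` is a proper conformal Killing vector of the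
Kimura metric with conformal factor 2rbt: £_ξ g = 2rbt g on {r>0, 0<θ<π}. -/
lemma pd_comp (μ i : Fin 4) {F : ℝ → ℝ} {F' : ℝ} (p : Pt) (hF : HasDerivAt F F' (p i)) :
    pd μ (fun q => F (q i)) p = F' * (if i = μ then 1 else 0) := by
  have h := hF.comp_hasFDerivAt p
    ((ContinuousLinearMap.proj i : Pt →L[ℝ] ℝ).hasFDerivAt (x := p))
  rw [pd, (show HasFDerivAt (fun q : Pt => F (q i)) (F' • ContinuousLinearMap.proj i) p from h).fderiv]
  simp [Pi.single_apply]

lemma pd_mul2 (μ i j : Fin 4) {F G : ℝ → ℝ} {F' G' : ℝ} (p : Pt)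
    (hF : HasDerivAt F F' (p i)) (hG : HasDerivAt G G' (p j)) :
    pd μ (fun q => F (q i) * G (q j)) p
      = F' * (if i = μ then 1 else 0) * G (p j)
        + F (p i) * (G' * (if j = μ then 1 else 0)) := by
  have hFf := hF.comp_hasFDerivAt p
    ((ContinuousLinearMap.proj i : Pt →L[ℝ] ℝ).hasFDerivAt (x := p))
  have hGf := hG.comp_hasFDerivAt p
    ((ContinuousLinearMap.proj j : Pt →L[ℝ] ℝ).hasFDerivAt (x := p))
  have h := hFf.mul hGf
  rw [pd, (show HasFDerivAt (fun q : Pt => F (q i) * G (q j))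
      (F (p i) • G' • ContinuousLinearMap.proj j + G (p j) • F' • ContinuousLinearMap.proj i) p from h).fderiv]
  simp [Pi.single_apply]
  ring_nf

lemma deriv_sq (x : ℝ) : HasDerivAt (fun y : ℝ => y ^ 2) (2 * x) x := by
  simpa using hasDerivAt_pow 2 x

lemma pd_zero (μ : Fin 4) (p : Pt) : pd μ (fun _ : Pt => (0:ℝ)) p = 0 := by
  simp [pd]

lemma pdA (b : ℝ) (μ : Fin 4) (p : Pt) :
    pd μ (fun q : Pt => q 1 ^ 2 / b) p = (2 * p 1 / b) * (if (1:Fin 4) = μ then 1 else 0) :=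
  pd_comp μ 1 p ((deriv_sq (p 1)).div_const b)

lemma pdB (b : ℝ) (μ : Fin 4) (p : Pt) (hr : p 1 ≠ 0) (hb : b ≠ 0) :
    pd μ (fun q : Pt => -(1 / (q 1 ^ 2 * b ^ 2))) p
      = (2 / (p 1 ^ 3 * b ^ 2)) * (if (1:Fin 4) = μ then 1 else 0) := by
  have hne : p 1 ^ 2 * b ^ 2 ≠ 0 := mul_ne_zero (pow_ne_zero _ hr) (pow_ne_zero _ hb)
  have h3 : HasDerivAt (fun y : ℝ => (y ^ 2 * b ^ 2)⁻¹)
      (-(2 * p 1 * b ^ 2) / (p 1 ^ 2 * b ^ 2) ^ 2) (p 1) :=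
    ((deriv_sq (p 1)).mul_const (b ^ 2)).inv hne
  have h4 : HasDerivAt (fun y : ℝ => -(1 / (y ^ 2 * b ^ 2))) (2 / (p 1 ^ 3 * b ^ 2)) (p 1) := by
    have e : 2 / (p 1 ^ 3 * b ^ 2) = -(-(2 * p 1 * b ^ 2) / (p 1 ^ 2 * b ^ 2) ^ 2) := by
      field_simp
    rw [e]; simp only [one_div]; exact h3.neg
  exact pd_comp μ 1 p h4

lemma pdC (μ : Fin 4) (p : Pt) :
    pd μ (fun q : Pt => -(q 1 ^ 2)) p = (-(2 * p 1)) * (if (1:Fin 4) = μ then 1 else 0) :=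
  pd_comp μ 1 p (deriv_sq (p 1)).neg

lemma pdD (μ : Fin 4) (p : Pt) :
    pd μ (fun q : Pt => -(q 1 ^ 2 * Real.sin (q 2) ^ 2)) p
      = (-(2 * p 1)) * (if (1:Fin 4) = μ then 1 else 0) * Real.sin (p 2) ^ 2
        + (-(p 1 ^ 2)) * ((2 * (Real.cos (p 2) * Real.sin (p 2))) * (if (2:Fin 4) = μ then 1 else 0)) := by
  have e : (fun q : Pt => -(q 1 ^ 2 * Real.sin (q 2) ^ 2))
      = fun q : Pt => (-(q 1 ^ 2)) * Real.sin (q 2) ^ 2 := by funext q; ring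
  rw [e]
  exact pd_mul2 μ 1 2 p (deriv_sq (p 1)).neg
    (by simpa [mul_comm, mul_assoc, mul_left_comm] using (Real.hasDerivAt_sin (p 2)).pow 2)

lemma pdE (μ : Fin 4) (p : Pt) (hr : p 1 ≠ 0) :
    pd μ (fun q : Pt => -(1 / q 1)) p = (1 / p 1 ^ 2) * (if (1:Fin 4) = μ then 1 else 0) := by
  have h : HasDerivAt (fun y : ℝ => -(1 / y)) (1 / p 1 ^ 2) (p 1) := by
    have e : (1 / p 1 ^ 2 : ℝ) = -(-(p 1 ^ 2)⁻¹) := by rw [one_div, neg_neg]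
    rw [e]; simp only [one_div]; exact (hasDerivAt_inv hr).neg
  exact pd_comp μ 1 p h

lemma pdF (b : ℝ) (μ : Fin 4) (p : Pt) :
    pd μ (fun q : Pt => q 1 ^ 2 * b * q 0) p
      = (2 * p 1 * b) * (if (1:Fin 4) = μ then 1 else 0) * p 0
        + (p 1 ^ 2 * b) * (1 * (if (0:Fin 4) = μ then 1 else 0)) := by
  have e : (fun q : Pt => q 1 ^ 2 * b * q 0)
      = fun q : Pt => (q 1 ^ 2 * b) * q 0 := by funext q; ring
  rw [e]
  exact pd_mul2 μ 1 0 p ((deriv_sq (p 1)).mul_const b) (hasDerivAt_id (p 0))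

lemma pdB' (b : ℝ) (p : Pt) (hr : p 1 ≠ 0) (hb : b ≠ 0) (μ : Fin 4) :
    pd μ (fun q : Pt => -((b ^ 2)⁻¹ * (q 1 ^ 2)⁻¹)) p
      = (2 / (p 1 ^ 3 * b ^ 2)) * (if (1:Fin 4) = μ then 1 else 0) := by
  have e : (fun q : Pt => -((b ^ 2)⁻¹ * (q 1 ^ 2)⁻¹))
      = fun q : Pt => -(1 / (q 1 ^ 2 * b ^ 2)) := by
    funext q; rw [one_div, mul_inv]; ring
  rw [e]; exact pdB b μ p hr hb

lemma pdE' (p : Pt) (hr : p 1 ≠ 0) (μ : Fin 4) :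
    pd μ (fun q : Pt => -(q 1)⁻¹) p = (1 / p 1 ^ 2) * (if (1:Fin 4) = μ then 1 else 0) := by
  have e : (fun q : Pt => -(q 1)⁻¹) = fun q : Pt => -(1 / q 1) := by
    funext q; rw [one_div]
  rw [e]; exact pdE μ p hr

theorem kimura_proper_CKV_boost (b : ℝ) (hb : b ≠ 0) :
    ∀ p : Pt, 0 < p 1 → 0 < p 2 → p 2 < Real.pi → ∀ μ ν : Fin 4,
      lieDg (fun p => ![-(1 / p 1), p 1 ^ 2 * b * p 0, 0, 0]) (kimura b) p μ ν
        = 2 * p 1 * b * p 0 * kimura b p μ ν := by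
  intro p hr hth1 hth2 mu nu
  have hrne : p 1 ≠ 0 := hr.ne'
  fin_cases mu <;> fin_cases nu <;>
    simp [lieDg, kimura, Fin.sum_univ_four, Matrix.vecHead, Matrix.vecTail] <;>
    simp only [pd_zero, pdA b _ p, pdB' b p hrne hb, pdC _ p, pdD _ p, pdE' p hrne,
      pdF b _ p] <;>
    (try simp) <;> (try field_simp) <;> ring
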